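/- arXiv:2409.10412 — 6 statements merged into one kernel-verified Lean document; each statement's English description precedes it below -/
import Mathlib

section
/- Let q be a prime power. Let (m_k), (n_k), (r_k) be sequences of positive integers with m_k → ∞, n_k → ∞ and min{m_k, n_k} − r_k → ∞. For each k, let M_k be chosen uniformly at random from the set F_q^{m_k × n_k, r_k} of m_k × n_k matrices of rank r_k over F_q, let X_k be chosen uniformly from F_q^{m_k × r_k} and Y_k uniformly from F_q^{r_k × n_k}, with X_k and Y_k independent. Then the total variation distance sum over all N ∈ F_q^{m_k × n_k} of |P[X_k Y_k = N] − P[M_k = N]| tends to 0 as k → ∞. -/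
/-! For `N` of rank `r`, the factorizations `N = X * Y` through `F^r` correspond to the
injective `X` whose column space is that of `N`, and `GL_m(F)` permutes the `r`-dimensional
subspaces transitively; so their number does not depend on `N`. Hence `XY`, conditioned on having
rank `r`, is uniform on the matrices of rank `r`, and the total variation distance is at most
`2 P[rank (XY) ≠ r] ≤ 2 (P[rank X < r] + P[rank Y < r])`. A union bound over the possible nonzero
kernel vectors gives `P[rank X < r] ≤ q^r / q^m ≤ 2^(r - m)`, and likewise for `Y`. -/

open scoped Classical BigOperators
open Filter

noncomputable section

/-- The set of `m × n` matrices of rank `r` over `F`. -/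
def rankSet (F : Type*) [Field F] [Fintype F] (m n r : ℕ) :
    Finset (Matrix (Fin m) (Fin n) F) :=
  Finset.univ.filter (fun M => M.rank = r)

/-- `P[M = N]` where `M` is uniform on the `m × n` matrices of rank `r`. -/
def probRankEq (F : Type*) [Field F] [Fintype F] (m n r : ℕ)
    (N : Matrix (Fin m) (Fin n) F) : ℝ :=
  (((rankSet F m n r).filter (fun M => M = N)).card : ℝ) /
    ((rankSet F m n r).card : ℝ)

/-- `P[XY = N]` where `X` is uniform on `m × r` matrices, `Y` is uniform on `r × n`
matrices, and `X, Y` are independent. -/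
def probProdEq (F : Type*) [Field F] [Fintype F] (m n r : ℕ)
    (N : Matrix (Fin m) (Fin n) F) : ℝ :=
  ((Finset.univ.filter
      (fun P : Matrix (Fin m) (Fin r) F × Matrix (Fin r) (Fin n) F =>
        P.1 * P.2 = N)).card : ℝ) /
    (Fintype.card (Matrix (Fin m) (Fin r) F × Matrix (Fin r) (Fin n) F) : ℝ)

open Module Finset

section LinearAlgebra

variable {K V : Type*} [Field K] [AddCommGroup V] [Module K V]

theorem Submodule.exists_linearEquiv_map_eq_of_finrank_eq [FiniteDimensional K V]
    {W W' : Submodule K V} (h : finrank K W = finrank K W') :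
    ∃ e : V ≃ₗ[K] V, W.map (e : V →ₗ[K] V) = W' := by
  obtain ⟨C, hC⟩ := W.exists_isCompl
  obtain ⟨C', hC'⟩ := W'.exists_isCompl
  have hCC' : finrank K C = finrank K C' := by
    have := Submodule.finrank_add_eq_of_isCompl hC
    have := Submodule.finrank_add_eq_of_isCompl hC'
    omega
  let e₀ := LinearEquiv.ofFinrankEq W W' h
  let e := (W.prodEquivOfIsCompl C hC).symm ≪≫ₗ
    e₀.prodCongr (LinearEquiv.ofFinrankEq C C' hCC') ≪≫ₗ W'.prodEquivOfIsCompl C' hC'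
  have he : (e : V →ₗ[K] V) ∘ₗ W.subtype = W'.subtype ∘ₗ (e₀ : W →ₗ[K] W') := by
    ext x
    simp [e]
  refine ⟨e, ?_⟩
  rw [← W.range_subtype, ← LinearMap.range_comp, he, LinearMap.range_comp, LinearEquiv.range,
    Submodule.map_top, Submodule.range_subtype]

variable {U : Type*} [AddCommGroup U] [Module K U]

theorem LinearMap.natCard_range_eq_congr [FiniteDimensional K V] {W W' : Submodule K V}
    (h : finrank K W = finrank K W') :
    Nat.card {f : U →ₗ[K] V // range f = W} = Nat.card {f : U →ₗ[K] V // range f = W'} := by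
  obtain ⟨e, he⟩ := W.exists_linearEquiv_map_eq_of_finrank_eq h
  refine Nat.card_congr ((LinearEquiv.congrRight e).toEquiv.subtypeEquiv fun f => ?_)
  change range f = W ↔ range ((e : V →ₗ[K] V) ∘ₗ f) = W'
  rw [← he, LinearMap.range_comp]
  exact (Submodule.map_injective_of_injective e.injective).eq_iff.symm

theorem LinearMap.natCard_comp_eq_eq_natCard_range_eq [FiniteDimensional K U]
    {W : Type*} [AddCommGroup W] [Module K W] (g : W →ₗ[K] V)
    (hg : finrank K (range g) = finrank K U) :
    Nat.card {P : (U →ₗ[K] V) × (W →ₗ[K] U) // P.1 ∘ₗ P.2 = g} =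
      Nat.card {f : U →ₗ[K] V // range f = range g} := by
  have range_eq (P : (U →ₗ[K] V) × (W →ₗ[K] U)) (hP : P.1 ∘ₗ P.2 = g) : range P.1 = range g :=
    (Submodule.eq_of_le_of_finrank_le (hP ▸ range_comp_le_range _ _)
      (hg ▸ finrank_range_le _)).symm
  have ker_eq (f : U →ₗ[K] V) (hf : range f = range g) : ker f = ⊥ := by
    have := finrank_range_add_finrank_ker f
    rw [hf, hg] at this
    exact Submodule.finrank_eq_zero.mp (by omega)
  refine Nat.card_eq_of_bijective (fun P => ⟨P.1.1, range_eq P.1 P.2⟩) ⟨?_, ?_⟩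
  · rintro ⟨⟨f, h⟩, hP⟩ ⟨⟨f', h'⟩, hP'⟩ hff'
    obtain rfl : f = f' := congrArg Subtype.val hff'
    obtain rfl : h = h' := LinearMap.ext fun x =>
      LinearMap.ker_eq_bot.mp (ker_eq f (range_eq _ hP)) (LinearMap.congr_fun (hP.trans hP'.symm) x)
    rfl
  · rintro ⟨f, hf⟩
    obtain ⟨l, hl⟩ := f.exists_leftInverse_of_injective (ker_eq f hf)
    refine ⟨⟨(f, l ∘ₗ g), ?_⟩, rfl⟩
    ext x
    obtain ⟨y, hy⟩ : g x ∈ range f := hf ▸ mem_range_self g x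
    simp [← hy, ← LinearMap.comp_apply l f, hl]

end LinearAlgebra

namespace Matrix

variable {F : Type*} [Field F] {l m n : Type*} [Fintype m] [Fintype n]

theorem exists_mulVec_eq_zero_of_rank_ne {X : Matrix l n F} (h : X.rank ≠ Fintype.card n) :
    ∃ v ≠ 0, X *ᵥ v = 0 := by
  by_contra! hX
  have hinj : Function.Injective X.mulVecLin := LinearMap.ker_eq_bot.mp
    (ker_mulVecLin_eq_bot_iff.mpr fun v hv => by_contra fun hv0 => hX v hv0 hv)
  exact h (by rw [rank, LinearMap.finrank_range_of_inj hinj, finrank_fintype_fun_eq_card])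

theorem rank_mul_eq_card_of_rank_eq_card {X : Matrix l m F} {Y : Matrix m n F}
    (hX : X.rank = Fintype.card m) (hY : Y.rank = Fintype.card m) :
    (X * Y).rank = Fintype.card m := by
  have hY' : LinearMap.range Y.mulVecLin = ⊤ :=
    Submodule.eq_top_of_finrank_eq (by rw [← rank, hY, finrank_fintype_fun_eq_card])
  rw [rank, mulVecLin_mul, LinearMap.range_comp, hY', Submodule.map_top, ← rank, hX]

variable [Fintype F] [DecidableEq m] [DecidableEq n]

theorem _root_.Fintype.card_matrix :
    Fintype.card (Matrix m n F) = Fintype.card F ^ (Fintype.card m * Fintype.card n) := by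
  rw [Module.card_eq_pow_finrank (K := F), finrank_matrix, finrank_self, mul_one]

theorem card_mulVec_eq_zero_mul {v : n → F} (hv : v ≠ 0) :
    #{X : Matrix m n F | X *ᵥ v = 0} * Fintype.card F ^ Fintype.card m =
      Fintype.card F ^ (Fintype.card m * Fintype.card n) := by
  let φ : Matrix m n F →+ m → F := AddMonoidHom.mk' (· *ᵥ v) fun X Y => add_mulVec X Y v
  have hφ : Function.Surjective φ := by
    obtain ⟨j, hj⟩ : ∃ j, v j ≠ 0 := Function.ne_iff.mp hv
    intro w
    refine ⟨vecMulVec w (Pi.single j (v j)⁻¹), ?_⟩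
    simp [φ, vecMulVec_mulVec, single_dotProduct, hj]
  have := φ.ker.card_mul_index
  rw [AddSubgroup.index_ker, AddMonoidHom.range_eq_top.mpr hφ, AddSubgroup.card_top] at this
  simp only [Nat.card_eq_fintype_card] at this
  rw [Fintype.card_fun, Fintype.card_matrix] at this
  simpa [Fintype.card_subtype, φ] using this

theorem card_rank_ne_mul_le :
    #{X : Matrix m n F | X.rank ≠ Fintype.card n} * Fintype.card F ^ Fintype.card m ≤
      Fintype.card F ^ Fintype.card n * Fintype.card F ^ (Fintype.card m * Fintype.card n) :=
  calc _ ≤ (∑ v ∈ univ.erase 0, #{X : Matrix m n F | X *ᵥ v = 0}) *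
        Fintype.card F ^ Fintype.card m := by
        gcongr
        refine (card_le_card fun X hX => ?_).trans card_biUnion_le
        obtain ⟨v, hv, hXv⟩ := exists_mulVec_eq_zero_of_rank_ne (mem_filter.mp hX).2
        exact mem_biUnion.mpr ⟨v, mem_erase.mpr ⟨hv, mem_univ v⟩, mem_filter.mpr ⟨mem_univ X, hXv⟩⟩
    _ = (Fintype.card F ^ Fintype.card n - 1) *
        Fintype.card F ^ (Fintype.card m * Fintype.card n) := by
        rw [sum_mul, sum_congr rfl fun v hv => card_mulVec_eq_zero_mul (mem_erase.mp hv).1,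
          sum_const, card_erase_of_mem (mem_univ _), card_univ, smul_eq_mul, Fintype.card_fun]
    _ ≤ _ := Nat.mul_le_mul_right _ (Nat.sub_le _ _)

theorem card_rank_ne_transpose (k : ℕ) :
    #{Y : Matrix m n F | Y.rank ≠ k} = #{Z : Matrix n m F | Z.rank ≠ k} :=
  card_nbij' transpose transpose (fun Y hY => by simpa [rank_transpose] using hY)
    (fun Z hZ => by simpa [rank_transpose] using hZ) (fun _ _ => rfl) (fun _ _ => rfl)

theorem card_rank_ne_div_le {m r : ℕ} (hrm : r ≤ m) :
    (#{X : Matrix (Fin m) (Fin r) F | X.rank ≠ r} : ℝ) / Fintype.card F ^ (m * r) ≤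
      (1 / 2) ^ (m - r) := by
  have key : (#{X : Matrix (Fin m) (Fin r) F | X.rank ≠ r} : ℝ) * Fintype.card F ^ m ≤
      Fintype.card F ^ r * Fintype.card F ^ (m * r) := by
    have := card_rank_ne_mul_le (F := F) (m := Fin m) (n := Fin r)
    simp only [Fintype.card_fin] at this
    exact_mod_cast this
  have hq : (2 : ℝ) ≤ Fintype.card F := by exact_mod_cast Fintype.one_lt_card
  generalize #{X : Matrix (Fin m) (Fin r) F | X.rank ≠ r} = b at *
  generalize (Fintype.card F : ℝ) = q at *
  have hpow : q ^ m = q ^ (m - r) * q ^ r := by rw [← pow_add, Nat.sub_add_cancel hrm]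
  rw [div_le_iff₀ (by positivity)]
  calc (b : ℝ) ≤ q ^ r * q ^ (m * r) / q ^ m := by
        rw [le_div_iff₀ (by positivity)]; exact key
    _ = (1 / q) ^ (m - r) * q ^ (m * r) := by
        rw [hpow, div_pow, one_pow]; field_simp
    _ ≤ _ := by gcongr

variable [Fintype l] [DecidableEq l]

theorem card_mul_eq_eq_natCard_range_eq {N : Matrix l n F} (hN : N.rank = Fintype.card m) :
    #{P : Matrix l m F × Matrix m n F | P.1 * P.2 = N} =
      Nat.card {f : (m → F) →ₗ[F] l → F // LinearMap.range f = LinearMap.range N.mulVecLin} := by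
  have hN' : finrank F (LinearMap.range N.mulVecLin) = finrank F (m → F) := by
    rwa [← rank, finrank_fintype_fun_eq_card]
  rw [← Fintype.card_subtype, ← Nat.card_eq_fintype_card,
    ← LinearMap.natCard_comp_eq_eq_natCard_range_eq _ hN']
  refine Nat.card_congr ((toLin'.toEquiv.prodCongr toLin'.toEquiv).subtypeEquiv fun P => ?_)
  change P.1 * P.2 = N ↔ toLin' P.1 ∘ₗ toLin' P.2 = toLin' N
  rw [← toLin'_mul, toLin'.injective.eq_iff]

theorem card_mul_eq_eq_of_rank_eq {N N' : Matrix l n F} (hN : N.rank = Fintype.card m)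
    (hN' : N'.rank = Fintype.card m) :
    #{P : Matrix l m F × Matrix m n F | P.1 * P.2 = N} =
      #{P : Matrix l m F × Matrix m n F | P.1 * P.2 = N'} := by
  rw [card_mul_eq_eq_natCard_range_eq hN, card_mul_eq_eq_natCard_range_eq hN']
  exact LinearMap.natCard_range_eq_congr (by rw [← rank, ← rank, hN, hN'])

end Matrix

theorem sum_abs_sub_uniform_le {α : Type*} [Fintype α] [DecidableEq α] (S : Finset α) {p : α → ℝ}
    (hp : ∀ a, 0 ≤ p a) (hsum : ∑ a, p a = 1) (hconst : ∀ a ∈ S, ∀ b ∈ S, p a = p b) :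
    ∑ a, |p a - if a ∈ S then 1 / (#S : ℝ) else 0| ≤ 2 * (1 - ∑ a ∈ S, p a) := by
  rcases S.eq_empty_or_nonempty with rfl | ⟨a₀, ha₀⟩
  · simp [abs_of_nonneg (hp _), hsum]
  have hS : ∑ a ∈ S, p a = #S * p a₀ := by
    rw [sum_congr rfl fun a ha => hconst a ha a₀ ha₀, sum_const, nsmul_eq_mul]
  have hS_le : ∑ a ∈ S, p a ≤ 1 := hsum ▸ sum_le_univ_sum_of_nonneg hp
  have hcard : (0 : ℝ) < #S := by exact_mod_cast card_pos.mpr ⟨a₀, ha₀⟩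
  have hin : ∀ a ∈ S, |p a - if a ∈ S then 1 / (#S : ℝ) else 0| = 1 / #S - p a₀ := by
    intro a ha
    rw [if_pos ha, hconst a ha a₀ ha₀, abs_sub_comm, abs_of_nonneg]
    rw [sub_nonneg, le_div_iff₀ hcard, mul_comm, ← hS]
    exact hS_le
  have hout : ∀ a ∈ univ \ S, |p a - if a ∈ S then 1 / (#S : ℝ) else 0| = p a := by
    intro a ha
    rw [if_neg (mem_sdiff.mp ha).2, sub_zero, abs_of_nonneg (hp a)]
  rw [← sum_sdiff (subset_univ S), sum_congr rfl hout, sum_congr rfl hin, sum_const,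
    nsmul_eq_mul, sum_sdiff_eq_sub (subset_univ S), hsum, hS]
  field_simp
  linarith

section UniformLaws

variable {F : Type*} [Field F] [Fintype F] {m n r : ℕ}

theorem probRankEq_eq_ite (N : Matrix (Fin m) (Fin n) F) :
    probRankEq F m n r N = if N ∈ rankSet F m n r then 1 / (#(rankSet F m n r) : ℝ) else 0 := by
  rw [probRankEq, filter_eq']
  split_ifs <;> simp

theorem probProdEq_nonneg (N : Matrix (Fin m) (Fin n) F) : 0 ≤ probProdEq F m n r N := by
  unfold probProdEq
  positivity

theorem sum_probProdEq : ∑ N, probProdEq F m n r N = 1 := by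
  simp only [probProdEq, ← sum_div, ← Nat.cast_sum]
  rw [← card_eq_sum_card_fiberwise fun _ _ => mem_univ _, card_univ]
  exact div_self (by positivity)

theorem probProdEq_eq_of_mem_rankSet {N N' : Matrix (Fin m) (Fin n) F}
    (hN : N ∈ rankSet F m n r) (hN' : N' ∈ rankSet F m n r) :
    probProdEq F m n r N = probProdEq F m n r N' := by
  simp only [rankSet, mem_filter, mem_univ, true_and] at hN hN'
  rw [probProdEq, probProdEq, Matrix.card_mul_eq_eq_of_rank_eq (m := Fin r) (by simpa using hN)
    (by simpa using hN')]

theorem one_sub_mul_one_sub_le_sum_probProdEq_rankSet :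
    (1 - (#{X : Matrix (Fin m) (Fin r) F | X.rank ≠ r} : ℝ) / Fintype.card F ^ (m * r)) *
        (1 - (#{Y : Matrix (Fin r) (Fin n) F | Y.rank ≠ r} : ℝ) / Fintype.card F ^ (r * n)) ≤
      ∑ N ∈ rankSet F m n r, probProdEq F m n r N := by
  have hA : (0 : ℝ) < Fintype.card F ^ (m * r) := by positivity
  have hB : (0 : ℝ) < Fintype.card F ^ (r * n) := by positivity
  have hX : (#{X : Matrix (Fin m) (Fin r) F | X.rank = r} : ℝ) =
      Fintype.card F ^ (m * r) - #{X : Matrix (Fin m) (Fin r) F | X.rank ≠ r} := by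
    rw [eq_sub_iff_add_eq, ← Nat.cast_add, card_filter_add_card_filter_not, card_univ,
      Fintype.card_matrix]
    simp
  have hY : (#{Y : Matrix (Fin r) (Fin n) F | Y.rank = r} : ℝ) =
      Fintype.card F ^ (r * n) - #{Y : Matrix (Fin r) (Fin n) F | Y.rank ≠ r} := by
    rw [eq_sub_iff_add_eq, ← Nat.cast_add, card_filter_add_card_filter_not, card_univ,
      Fintype.card_matrix]
    simp
  have hfull : #{X : Matrix (Fin m) (Fin r) F | X.rank = r} *
      #{Y : Matrix (Fin r) (Fin n) F | Y.rank = r} ≤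
        #{P : Matrix (Fin m) (Fin r) F × Matrix (Fin r) (Fin n) F |
          P.1 * P.2 ∈ rankSet F m n r} := by
    rw [← card_product]
    refine card_le_card fun P hP => ?_
    simp only [mem_product, mem_filter, mem_univ, true_and, rankSet] at hP ⊢
    simpa using Matrix.rank_mul_eq_card_of_rank_eq_card (m := Fin r) (by simpa using hP.1)
      (by simpa using hP.2)
  have hsum : ∑ N ∈ rankSet F m n r, probProdEq F m n r N =
      #{P : Matrix (Fin m) (Fin r) F × Matrix (Fin r) (Fin n) F | P.1 * P.2 ∈ rankSet F m n r} /
        ((Fintype.card F : ℝ) ^ (m * r) * Fintype.card F ^ (r * n)) := by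
    simp only [probProdEq, ← sum_div, ← Nat.cast_sum, sum_card_fiberwise_eq_card_filter,
      Fintype.card_prod, Fintype.card_matrix, Fintype.card_fin]
    push_cast
    rfl
  calc _ = (#{X : Matrix (Fin m) (Fin r) F | X.rank = r} : ℝ) *
        #{Y : Matrix (Fin r) (Fin n) F | Y.rank = r} /
          ((Fintype.card F : ℝ) ^ (m * r) * Fintype.card F ^ (r * n)) := by
        rw [hX, hY]; field_simp
    _ ≤ _ := by gcongr; exact_mod_cast hfull
    _ = _ := hsum.symm

theorem sum_abs_probProdEq_sub_probRankEq_le (hrm : r ≤ m) (hrn : r ≤ n) :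
    ∑ N : Matrix (Fin m) (Fin n) F, |probProdEq F m n r N - probRankEq F m n r N| ≤
      4 * (1 / 2) ^ (min m n - r) := by
  have hX := Matrix.card_rank_ne_div_le (F := F) hrm
  have hY : (#{Y : Matrix (Fin r) (Fin n) F | Y.rank ≠ r} : ℝ) / Fintype.card F ^ (r * n) ≤
      (1 / 2) ^ (n - r) := by
    rw [Matrix.card_rank_ne_transpose, mul_comm]
    exact Matrix.card_rank_ne_div_le hrn
  have hX₀ : (0 : ℝ) ≤ #{X : Matrix (Fin m) (Fin r) F | X.rank ≠ r} / Fintype.card F ^ (m * r) :=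
    by positivity
  have hY₀ : (0 : ℝ) ≤ #{Y : Matrix (Fin r) (Fin n) F | Y.rank ≠ r} / Fintype.card F ^ (r * n) :=
    by positivity
  have hS := one_sub_mul_one_sub_le_sum_probProdEq_rankSet (F := F) (m := m) (n := n) (r := r)
  have hm : (1 / 2 : ℝ) ^ (m - r) ≤ (1 / 2) ^ (min m n - r) :=
    pow_le_pow_of_le_one (by norm_num) (by norm_num) (by omega)
  have hn : (1 / 2 : ℝ) ^ (n - r) ≤ (1 / 2) ^ (min m n - r) :=
    pow_le_pow_of_le_one (by norm_num) (by norm_num) (by omega)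
  simp_rw [probRankEq_eq_ite]
  calc _ ≤ 2 * (1 - ∑ N ∈ rankSet F m n r, probProdEq F m n r N) :=
        sum_abs_sub_uniform_le _ probProdEq_nonneg sum_probProdEq
          fun _ hN _ hN' => probProdEq_eq_of_mem_rankSet hN hN'
    _ ≤ _ := by nlinarith

end UniformLaws

theorem totalVariation_prod_rank_tendsto_zero_general
    {F : Type*} [Field F] [Fintype F]
    (m n r : ℕ → ℕ)
    (hmnr : Tendsto (fun k => (min (m k) (n k) : ℤ) - (r k : ℤ)) atTop atTop) :
    Tendsto (fun k => ∑ N : Matrix (Fin (m k)) (Fin (n k)) F,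
        |probProdEq F (m k) (n k) (r k) N - probRankEq F (m k) (n k) (r k) N|)
      atTop (nhds 0) := by
  have hgap : Tendsto (fun k => min (m k) (n k) - r k) atTop atTop :=
    tendsto_natCast_atTop_iff.mp (tendsto_atTop_mono (fun k => by omega) hmnr)
  have hbound : Tendsto (fun k => 4 * (1 / 2 : ℝ) ^ (min (m k) (n k) - r k)) atTop (nhds 0) := by
    simpa using ((tendsto_pow_atTop_nhds_zero_of_lt_one (r := (1 / 2 : ℝ)) (by norm_num)
      (by norm_num)).comp hgap).const_mul 4
  refine squeeze_zero' (Eventually.of_forall fun k => sum_nonneg fun N _ => abs_nonneg _) ?_ hbound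
  filter_upwards [tendsto_atTop.mp hmnr 0] with k hk
  exact sum_abs_probProdEq_sub_probRankEq_le (by omega) (by omega)

/-- Lemma 2.1: the total variation distance between the law of `XY` and the uniform law on
rank-`r` matrices tends to `0` as `m, n → ∞` with `min{m,n} - r → ∞`. -/
theorem totalVariation_prod_rank_tendsto_zero
    {F : Type*} [Field F] [Fintype F]
    (m n r : ℕ → ℕ)
    (hm0 : ∀ k, 0 < m k) (hn0 : ∀ k, 0 < n k) (hr0 : ∀ k, 0 < r k)
    (hm : Tendsto m atTop atTop) (hn : Tendsto n atTop atTop)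
    (hmnr : Tendsto (fun k => (min (m k) (n k) : ℤ) - (r k : ℤ)) atTop atTop) :
    Tendsto (fun k => ∑ N : Matrix (Fin (m k)) (Fin (n k)) F,
        |probProdEq F (m k) (n k) (r k) N - probRankEq F (m k) (n k) (r k) N|)
      atTop (nhds 0) :=
  totalVariation_prod_rank_tendsto_zero_general m n r hmnr

end
end

section
/- Let q ≥ 2 be an integer and let m, n, r be positive integers with r ≤ min{m, n}. Then 0 < 1 − ∏_{i=0}^{r−1} (1 − q^{i−m})(1 − q^{i−n}) < (q^{r−m} + q^{r−n}) / (1 − q^{−1}). -/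
/-!
Every factor `(1 - q^{i-m})(1 - q^{i-n})` lies in `[0, 1)`, which gives positivity. For the upper
bound, the Weierstrass product inequality `1 - ∏ fᵢ ≤ ∑ (1 - fᵢ)` and `1 - (1 - x)(1 - y) ≤ x + y`
reduce it to the two geometric sums `∑_{i<r} q^{i-k}`, which telescope after multiplying by
`1 - q⁻¹`.
-/

open Finset

section OrderedRing

variable {ι R : Type*} [CommRing R] [LinearOrder R] [IsStrictOrderedRing R] {s : Finset ι} {f : ι → R}

theorem one_sub_prod_le_sum_one_sub (h0 : ∀ i ∈ s, 0 ≤ f i) (h1 : ∀ i ∈ s, f i ≤ 1) :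
    1 - ∏ i ∈ s, f i ≤ ∑ i ∈ s, (1 - f i) := by
  induction s using Finset.cons_induction with
  | empty => simp
  | cons a s _ ih =>
    rw [prod_cons, sum_cons]
    have hP : ∏ i ∈ s, f i ≤ 1 :=
      prod_le_one (fun i hi ↦ h0 i (mem_cons_of_mem hi)) (fun i hi ↦ h1 i (mem_cons_of_mem hi))
    have ih := ih (fun i hi ↦ h0 i (mem_cons_of_mem hi)) (fun i hi ↦ h1 i (mem_cons_of_mem hi))
    -- `1 - f a * P = (1 - f a) + f a * (1 - P)` and `f a * (1 - P) ≤ 1 - P`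
    nlinarith [h0 a (mem_cons_self a s), h1 a (mem_cons_self a s)]

theorem prod_lt_one_of_mem {j : ι} (h0 : ∀ i ∈ s, 0 ≤ f i) (h1 : ∀ i ∈ s, f i ≤ 1) (hj : j ∈ s)
    (hj1 : f j < 1) : ∏ i ∈ s, f i < 1 := by
  classical
  rw [← mul_prod_erase s f hj]
  exact mul_lt_one_of_nonneg_of_lt_one_left (h0 j hj) hj1
    (prod_le_one (fun i hi ↦ h0 i (mem_of_mem_erase hi)) (fun i hi ↦ h1 i (mem_of_mem_erase hi)))

end OrderedRing

theorem sum_range_zpow_sub_lt {K : Type*} [Field K] [LinearOrder K] [IsStrictOrderedRing K]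
    {a : K} (ha : 1 < a) (r : ℕ) (k : ℤ) :
    ∑ i ∈ range r, a ^ ((i : ℤ) - k) < a ^ ((r : ℤ) - k) / (1 - a⁻¹) := by
  have ha0 : 0 < a := zero_lt_one.trans ha
  have htelescope : (1 - a⁻¹) * ∑ i ∈ range r, a ^ ((i : ℤ) - k) =
      a ^ ((r : ℤ) - k - 1) - a ^ (-k - 1) := by
    have := sum_range_sub (fun i : ℕ ↦ a ^ ((i : ℤ) - k - 1)) r
    rw [Nat.cast_zero, zero_sub] at this
    rw [mul_sum, ← this]
    refine sum_congr rfl fun i _ ↦ ?_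
    push_cast
    rw [show (i : ℤ) + 1 - k - 1 = i - k by ring, zpow_sub_one₀ ha0.ne']
    ring
  have hden : 0 < 1 - a⁻¹ := sub_pos.2 (inv_lt_one_of_one_lt₀ ha)
  rw [lt_div_iff₀' hden, htelescope]
  have : a ^ ((r : ℤ) - k - 1) < a ^ ((r : ℤ) - k) := zpow_lt_zpow_right₀ ha (by omega)
  linarith [zpow_pos ha0 (-k - 1)]

theorem one_sub_prod_bound_general (q : ℕ) (hq : 2 ≤ q) (m n r : ℕ)
    (hr : 0 < r) (hrmn : r ≤ min m n) :
    0 < 1 - ∏ i ∈ Finset.range r,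
        ((1 - (q : ℝ) ^ ((i : ℤ) - (m : ℤ))) * (1 - (q : ℝ) ^ ((i : ℤ) - (n : ℤ)))) ∧
    1 - ∏ i ∈ Finset.range r,
        ((1 - (q : ℝ) ^ ((i : ℤ) - (m : ℤ))) * (1 - (q : ℝ) ^ ((i : ℤ) - (n : ℤ)))) <
      ((q : ℝ) ^ ((r : ℤ) - (m : ℤ)) + (q : ℝ) ^ ((r : ℤ) - (n : ℤ))) / (1 - (q : ℝ)⁻¹) := by
  have hq1 : (1 : ℝ) < q := by exact_mod_cast hq
  have hpow : ∀ k : ℕ, r ≤ k → ∀ i ∈ range r,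
      0 < (q : ℝ) ^ ((i : ℤ) - k) ∧ (q : ℝ) ^ ((i : ℤ) - k) < 1 := fun k hk i hi ↦
    ⟨zpow_pos (zero_lt_one.trans hq1) _,
      zpow_lt_one_of_neg₀ hq1 (by have := mem_range.1 hi; omega)⟩
  have hfactor : ∀ i ∈ range r,
      0 ≤ (1 - (q : ℝ) ^ ((i : ℤ) - m)) * (1 - (q : ℝ) ^ ((i : ℤ) - n)) ∧
      (1 - (q : ℝ) ^ ((i : ℤ) - m)) * (1 - (q : ℝ) ^ ((i : ℤ) - n)) < 1 ∧
      1 - (1 - (q : ℝ) ^ ((i : ℤ) - m)) * (1 - (q : ℝ) ^ ((i : ℤ) - n)) ≤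
        (q : ℝ) ^ ((i : ℤ) - m) + (q : ℝ) ^ ((i : ℤ) - n) := by
    intro i hi
    obtain ⟨hx0, hx1⟩ := hpow m (le_min_iff.1 hrmn).1 i hi
    obtain ⟨hy0, hy1⟩ := hpow n (le_min_iff.1 hrmn).2 i hi
    refine ⟨by nlinarith, by nlinarith, by nlinarith⟩
  refine ⟨sub_pos.2 (prod_lt_one_of_mem (fun i hi ↦ (hfactor i hi).1)
    (fun i hi ↦ (hfactor i hi).2.1.le) (mem_range.2 hr) (hfactor 0 (mem_range.2 hr)).2.1), ?_⟩
  calc _ ≤ ∑ i ∈ range r, ((q : ℝ) ^ ((i : ℤ) - m) + (q : ℝ) ^ ((i : ℤ) - n)) :=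
        (one_sub_prod_le_sum_one_sub (fun i hi ↦ (hfactor i hi).1)
          (fun i hi ↦ (hfactor i hi).2.1.le)).trans (sum_le_sum fun i hi ↦ (hfactor i hi).2.2)
    _ < _ := by
      rw [sum_add_distrib, add_div]
      exact add_lt_add (sum_range_zpow_sub_lt hq1 r m) (sum_range_zpow_sub_lt hq1 r n)

/-- The elementary estimate (2.1) from the proof of Lemma 2.1:
`0 < 1 - ∏_{i=0}^{r-1} (1 - q^{i-m})(1 - q^{i-n}) < (q^{r-m} + q^{r-n})/(1 - q⁻¹)`
for an integer `q ≥ 2` and positive integers `m, n, r` with `r ≤ min{m,n}`. -/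
theorem one_sub_prod_bound (q : ℕ) (hq : 2 ≤ q) (m n r : ℕ)
    (hm : 0 < m) (hn : 0 < n) (hr : 0 < r) (hrmn : r ≤ min m n) :
    0 < 1 - ∏ i ∈ Finset.range r,
        ((1 - (q : ℝ) ^ ((i : ℤ) - (m : ℤ))) * (1 - (q : ℝ) ^ ((i : ℤ) - (n : ℤ)))) ∧
    1 - ∏ i ∈ Finset.range r,
        ((1 - (q : ℝ) ^ ((i : ℤ) - (m : ℤ))) * (1 - (q : ℝ) ^ ((i : ℤ) - (n : ℤ)))) <
      ((q : ℝ) ^ ((r : ℤ) - (m : ℤ)) + (q : ℝ) ^ ((r : ℤ) - (n : ℤ))) / (1 - (q : ℝ)⁻¹) :=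
  one_sub_prod_bound_general q hq m n r hr hrmn
end

section
/- Let q be a prime power and let A be a fixed nonempty proper subset of F_q. Let (m_k), (n_k), (r_k) be sequences of positive integers with m_k → ∞, n_k → ∞ and min{m_k, n_k} − r_k → ∞. For each k, let M_k be chosen uniformly from F_q^{m_k × n_k, r_k}, and let X_k ∈ F_q^{m_k × r_k}, Y_k ∈ F_q^{r_k × n_k} be independent and uniformly distributed. Write ct̃_A(N) := (ct_A(N) − μ_A(q,m_k,n_k,r_k)) / sqrt(σ_A²(q,m_k,n_k,r_k)). Then for every real number t, |P[ct̃_A(M_k) ≤ t] − P[ct̃_A(X_k Y_k) ≤ t]| → 0 as k → ∞. -/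
open scoped Classical BigOperators
open Filter

noncomputable section

/-- `ctA A M` is the number of entries of the matrix `M` that lie in `A`. -/
def ctA {F : Type*} [Fintype F] {m n : ℕ} (A : Finset F)
    (M : Matrix (Fin m) (Fin n) F) : ℕ :=
  (Finset.univ.filter (fun p : Fin m × Fin n => M p.1 p.2 ∈ A)).card

/-- `γ_A(q) = q⁻¹ #A - 1_A(0)`. -/
def gammaA {F : Type*} [Fintype F] [Zero F] (A : Finset F) : ℝ :=
  (A.card : ℝ) / (Fintype.card F : ℝ) - (if (0 : F) ∈ A then 1 else 0)

/-- `μ_A(q,m,n,r) = mn (q⁻¹ #A - q^{-r} γ_A(q))`. -/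
def muA {F : Type*} [Fintype F] [Zero F] (A : Finset F) (m n r : ℕ) : ℝ :=
  (m : ℝ) * n *
    ((A.card : ℝ) / (Fintype.card F : ℝ) - ((Fintype.card F : ℝ))⁻¹ ^ r * gammaA A)

/-- `σ_A²(q,m,n,r)`. -/
def sigmaA2 {F : Type*} [Fintype F] [Zero F] (A : Finset F) (m n r : ℕ) : ℝ :=
  (m : ℝ) * n *
      ((A.card : ℝ) / (Fintype.card F : ℝ) - ((Fintype.card F : ℝ))⁻¹ ^ r * gammaA A) *
      (1 - (A.card : ℝ) / (Fintype.card F : ℝ) + ((Fintype.card F : ℝ))⁻¹ ^ r * gammaA A) +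
    (m : ℝ) * n * ((m : ℝ) + (n : ℝ) - 2) * ((Fintype.card F : ℝ))⁻¹ ^ r *
      (1 - ((Fintype.card F : ℝ))⁻¹ ^ r) * gammaA A ^ 2

/-- The probability, under the uniform distribution on `m × n` matrices of rank `r`,
that the normalized count of entries in `A` is at most `t`. -/
def probNormCtLe (F : Type*) [Field F] [Fintype F] (A : Finset F) (m n r : ℕ) (t : ℝ) : ℝ :=
  (((rankSet F m n r).filter (fun M =>
      ((ctA A M : ℝ) - muA A m n r) / Real.sqrt (sigmaA2 A m n r) ≤ t)).card : ℝ) /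
    ((rankSet F m n r).card : ℝ)

/-- The probability, for independent uniform `X ∈ F^{m×r}`, `Y ∈ F^{r×n}`, that the
normalized count of entries of `XY` in `A` is at most `t`. -/
def probNormCtProdLe (F : Type*) [Field F] [Fintype F] (A : Finset F) (m n r : ℕ)
    (t : ℝ) : ℝ :=
  ((Finset.univ.filter
      (fun P : Matrix (Fin m) (Fin r) F × Matrix (Fin r) (Fin n) F =>
        ((ctA A (P.1 * P.2) : ℝ) - muA A m n r) / Real.sqrt (sigmaA2 A m n r) ≤ t)).card : ℝ) /
    (Fintype.card (Matrix (Fin m) (Fin r) F × Matrix (Fin r) (Fin n) F) : ℝ)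

/-!
Every rank-`r` matrix `M` factors as `M = XY` with `X ∈ F^{m×r}`, `Y ∈ F^{r×n}` of full rank `r`,
and `GL_r(F)` acts simply transitively on these factorizations by `g • (X, Y) = (X g, g⁻¹ Y)`.
Hence, conditioned on the event `rank (XY) = r`, the product of independent uniform `X` and `Y` is
uniform on rank-`r` matrices, whatever statistic of `XY` one looks at. Conditioning on an event
of probability `1 - ε` moves any probability by at most `ε`, and `XY` fails to have rank `r`
only if `X` or `Y` does, which has probability at most `q^{r-m} + q^{r-n} ≤ 2 q^{r - min(m,n)}`.
-/

open Finset

theorem Finset.one_sub_sum_le_prod_one_sub {ι : Type*} [LinearOrder ι] (s : Finset ι)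
    {f : ι → ℝ} (h0 : ∀ i ∈ s, 0 ≤ f i) (h1 : ∀ i ∈ s, f i ≤ 1) :
    1 - ∑ i ∈ s, f i ≤ ∏ i ∈ s, (1 - f i) := by
  rw [prod_one_sub_ordered]
  gcongr with i hi
  exact mul_le_of_le_one_right (h0 i hi) <| prod_le_one
    (fun j hj => sub_nonneg.mpr (h1 j (mem_filter.mp hj).1))
    (fun j hj => sub_le_self _ (h0 j (mem_filter.mp hj).1))

theorem Finset.abs_card_filter_div_sub_le_of_subset {α : Type*} {s t : Finset α} (hst : s ⊆ t)
    (p : α → Prop) [DecidablePred p] :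
    |(#(s.filter p) : ℝ) / #s - #(t.filter p) / #t| ≤ 1 - #s / #t := by
  have has : #(s.filter p) ≤ #s := card_filter_le _ _
  have hab : #(s.filter p) ≤ #(t.filter p) := card_le_card (filter_subset_filter _ hst)
  have hst' : #s ≤ #t := card_le_card hst
  have hbt : #(t.filter p) + #s ≤ #t + #(s.filter p) := by
    have hinter : t.filter p ∩ s = s.filter p := by
      ext x; simp only [mem_inter, mem_filter]; have := @hst x; tauto
    rw [← card_union_add_card_inter, hinter]
    gcongr
    exact union_subset (filter_subset _ _) hst
  rcases s.eq_empty_or_nonempty with rfl | hs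
  · simp only [filter_empty, card_empty, CharP.cast_eq_zero, div_zero, zero_sub, abs_neg]
    rw [abs_of_nonneg (by positivity), zero_div, sub_zero]
    exact div_le_one_of_le₀ (Nat.cast_le.mpr (card_filter_le t p)) (Nat.cast_nonneg _)
  have hS : (0 : ℝ) < #s := by exact_mod_cast hs.card_pos
  have hT : (0 : ℝ) < #t := by exact_mod_cast hs.card_pos.trans_le hst'
  suffices h : |(#(s.filter p) : ℝ) * #t - #s * #(t.filter p)| ≤ (#t - #s) * #s by
    rw [div_sub_div _ _ hS.ne' hT.ne', one_sub_div hT.ne', abs_div, abs_of_pos (mul_pos hS hT),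
      div_le_div_iff₀ (mul_pos hS hT) hT]
    nlinarith
  rify at has hab hst' hbt
  have ha : (0 : ℝ) ≤ #(s.filter p) := Nat.cast_nonneg _
  rw [abs_le]
  constructor
  · nlinarith [mul_le_mul_of_nonneg_left hst' ha]
  · nlinarith [mul_le_mul_of_nonneg_right has (sub_nonneg.mpr hst')]

namespace Matrix

section OneSidedInverse

variable {F : Type*} [Field F] {k m n : Type*} [Fintype k] [Fintype m] [Fintype n]
  [DecidableEq k]

theorem exists_right_inverse_of_rank_eq_card_height {Y : Matrix k n F}
    (h : Y.rank = Fintype.card k) : ∃ Z : Matrix n k F, Y * Z = 1 := by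
  refine mulVec_surjective_iff_exists_right_inverse.mp ?_
  have : LinearMap.range Y.mulVecLin = ⊤ :=
    Submodule.eq_top_of_finrank_eq (by rw [← rank, h, Module.finrank_fintype_fun_eq_card])
  exact LinearMap.range_eq_top.mp this

theorem exists_left_inverse_of_rank_eq_card_width {X : Matrix m k F}
    (h : X.rank = Fintype.card k) : ∃ L : Matrix k m F, L * X = 1 := by
  obtain ⟨Z, hZ⟩ :=
    exists_right_inverse_of_rank_eq_card_height (Y := Xᵀ) (by rwa [rank_transpose])
  exact ⟨Zᵀ, by simpa using congrArg transpose hZ⟩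

theorem rank_mul_eq_right_of_mul_eq_one {L : Matrix k m F} {X : Matrix m k F}
    (hLX : L * X = 1) (Y : Matrix k n F) : (X * Y).rank = Y.rank :=
  le_antisymm (rank_mul_le_right X Y) <| by
    simpa [← Matrix.mul_assoc, hLX] using rank_mul_le_right L (X * Y)

theorem rank_mul_eq_iff {r : ℕ} {X : Matrix m (Fin r) F} {Y : Matrix (Fin r) n F} :
    (X * Y).rank = r ↔ X.rank = r ∧ Y.rank = r := by
  refine ⟨fun h => ?_, fun ⟨hX, hY⟩ => ?_⟩
  · have := rank_mul_le_left X Y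
    have := rank_mul_le_right X Y
    have := rank_le_card_width X
    have := rank_le_card_height Y
    simp only [Fintype.card_fin] at *
    omega
  · obtain ⟨L, hL⟩ :=
      exists_left_inverse_of_rank_eq_card_width (hX.trans (Fintype.card_fin r).symm)
    rw [rank_mul_eq_right_of_mul_eq_one hL, hY]

theorem mul_mul_eq_left_of_mul_eq_mul {X₀ X : Matrix m k F} {Y₀ Y : Matrix k n F}
    {L₀ : Matrix k m F} {Z : Matrix n k F} (hL₀ : L₀ * X₀ = 1) (hZ : Y * Z = 1)
    (h : X * Y = X₀ * Y₀) : X₀ * (L₀ * X) = X := by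
  have hX : X = X₀ * Y₀ * Z := by rw [← h, Matrix.mul_assoc, hZ, Matrix.mul_one]
  rw [hX, Matrix.mul_assoc X₀ Y₀, ← Matrix.mul_assoc L₀, hL₀, Matrix.one_mul]

theorem mul_mul_eq_right_of_mul_eq_mul {X₀ X : Matrix m k F} {Y₀ Y : Matrix k n F}
    {R₀ : Matrix n k F} {W : Matrix k m F} (hR₀ : Y₀ * R₀ = 1) (hW : W * X = 1)
    (h : X * Y = X₀ * Y₀) : Y * R₀ * Y₀ = Y := by
  have hY : Y = W * X₀ * Y₀ := by rw [Matrix.mul_assoc, ← h, ← Matrix.mul_assoc, hW, Matrix.one_mul]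
  rw [hY, Matrix.mul_assoc (W * X₀) Y₀, hR₀, Matrix.mul_one]

end OneSidedInverse

theorem exists_mul_eq_of_rank_eq {F : Type*} [Field F] {m n : Type*} [Fintype n] [DecidableEq n]
    {r : ℕ} {M : Matrix m n F} (h : M.rank = r) :
    ∃ (X : Matrix m (Fin r) F) (Y : Matrix (Fin r) n F), X * Y = M := by
  let e : LinearMap.range M.mulVecLin ≃ₗ[F] (Fin r → F) :=
    LinearEquiv.ofFinrankEq _ _ (by rw [← rank, h, Module.finrank_fin_fun])
  refine ⟨LinearMap.toMatrix' ((LinearMap.range M.mulVecLin).subtype ∘ₗ e.symm.toLinearMap),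
    LinearMap.toMatrix' (e.toLinearMap ∘ₗ M.mulVecLin.rangeRestrict), ?_⟩
  have : ((LinearMap.range M.mulVecLin).subtype ∘ₗ e.symm.toLinearMap) ∘ₗ
      (e.toLinearMap ∘ₗ M.mulVecLin.rangeRestrict) = M.mulVecLin := by
    ext v; simp
  rw [← LinearMap.toMatrix'_comp, this, ← Matrix.toLin'_apply', LinearMap.toMatrix'_toLin']

theorem card_fin_fin (F : Type*) [Fintype F] (m r : ℕ) :
    Fintype.card (Matrix (Fin m) (Fin r) F) = (Fintype.card F ^ m) ^ r := by
  simp [← Fintype.card_congr Matrix.of, ← pow_mul, mul_comm]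

section FiniteField

variable {F : Type*} [Field F] [Fintype F]

theorem rank_eq_iff_linearIndependent_col {m r : ℕ} (X : Matrix (Fin m) (Fin r) F) :
    X.rank = r ↔ LinearIndependent F X.col := by
  rw [linearIndependent_iff_card_eq_finrank_span, rank_eq_finrank_span_cols, Set.finrank,
    Fintype.card_fin, eq_comm]

theorem card_filter_rank_eq_width {m r : ℕ} (h : r ≤ m) :
    #{X : Matrix (Fin m) (Fin r) F | X.rank = r} =
      ∏ i : Fin r, (Fintype.card F ^ m - Fintype.card F ^ (i : ℕ)) := by
  rw [← Fintype.card_subtype, ← Nat.card_eq_fintype_card,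
    Nat.card_congr (Equiv.subtypeEquiv ((transposeAddEquiv _ _ F).toEquiv.trans Matrix.of.symm)
      (q := fun s => LinearIndependent F s) (fun X => X.rank_eq_iff_linearIndependent_col)),
    card_linearIndependent (by rwa [Module.finrank_fin_fun]), Module.finrank_fin_fun]

theorem one_sub_inv_pow_le_card_filter_rank_eq_width_div {m r : ℕ} (h : r ≤ m) :
    1 - ((Fintype.card F : ℝ))⁻¹ ^ (m - r) ≤
      #{X : Matrix (Fin m) (Fin r) F | X.rank = r} / Fintype.card (Matrix (Fin m) (Fin r) F) := by
  set q := Fintype.card F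
  have hq : 1 < q := Fintype.one_lt_card
  have hq0 : (0 : ℝ) < q := by positivity
  have hratio : (#{X : Matrix (Fin m) (Fin r) F | X.rank = r} : ℝ) /
      Fintype.card (Matrix (Fin m) (Fin r) F) = ∏ i : Fin r, (1 - (q : ℝ) ^ (i : ℕ) / q ^ m) := by
    rw [card_filter_rank_eq_width h, card_fin_fin, Nat.cast_prod, Nat.cast_pow,
      ← Fin.prod_const r ((q ^ m : ℕ) : ℝ), ← prod_div_distrib]
    refine prod_congr rfl fun i _ => ?_
    rw [Nat.cast_sub (Nat.pow_le_pow_right hq.le (by omega))]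
    field_simp
    push_cast
    ring
  have hgeom : ∑ i : Fin r, (q : ℝ) ^ (i : ℕ) ≤ q ^ r := by
    exact_mod_cast (Fin.sum_univ_eq_sum_range (q ^ ·) r ▸ Nat.geomSum_lt hq (by simp)).le
  calc 1 - (q : ℝ)⁻¹ ^ (m - r) = 1 - (q : ℝ) ^ r / q ^ m := by
        rw [← Nat.sub_add_cancel h, pow_add, Nat.add_sub_cancel,
          div_mul_cancel_right₀ (by positivity), inv_pow]
    _ ≤ 1 - ∑ i : Fin r, (q : ℝ) ^ (i : ℕ) / q ^ m := by rw [← sum_div]; gcongr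
    _ ≤ ∏ i : Fin r, (1 - (q : ℝ) ^ (i : ℕ) / q ^ m) :=
        one_sub_sum_le_prod_one_sub _ (fun _ _ => by positivity) fun i _ =>
          div_le_one_of_le₀ (pow_le_pow_right₀ (by exact_mod_cast hq.le) (by omega))
            (by positivity)
    _ = _ := hratio.symm

theorem one_sub_inv_pow_le_card_filter_rank_eq_height_div {n r : ℕ} (h : r ≤ n) :
    1 - ((Fintype.card F : ℝ))⁻¹ ^ (n - r) ≤
      #{Y : Matrix (Fin r) (Fin n) F | Y.rank = r} / Fintype.card (Matrix (Fin r) (Fin n) F) := by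
  rw [card_equiv (transposeAddEquiv _ _ F).toEquiv
      (t := {X : Matrix (Fin n) (Fin r) F | X.rank = r}) (by simp [rank_transpose]),
    Fintype.card_congr (transposeAddEquiv _ _ F).toEquiv]
  exact one_sub_inv_pow_le_card_filter_rank_eq_width_div h

/-- The factorizations of `M` are the `(X₀ g, g⁻¹ Y₀)` for `g ∈ GL_r(F)`, where `M = X₀ Y₀`;
`g` is recovered from `(X, Y)` as `L₀ X`, with inverse `Y R₀`, for one-sided inverses `L₀`, `R₀`
of `X₀`, `Y₀`. -/
theorem card_filter_mul_eq {m n r : ℕ} {M : Matrix (Fin m) (Fin n) F} (hM : M.rank = r) :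
    #{P : Matrix (Fin m) (Fin r) F × Matrix (Fin r) (Fin n) F | P.1 * P.2 = M} =
      Fintype.card (GL (Fin r) F) := by
  obtain ⟨X₀, Y₀, rfl⟩ := exists_mul_eq_of_rank_eq hM
  obtain ⟨hX₀, hY₀⟩ := rank_mul_eq_iff.mp hM
  obtain ⟨L₀, hL₀⟩ :=
    exists_left_inverse_of_rank_eq_card_width (hX₀.trans (Fintype.card_fin r).symm)
  obtain ⟨R₀, hR₀⟩ :=
    exists_right_inverse_of_rank_eq_card_height (hY₀.trans (Fintype.card_fin r).symm)
  have factors {P : Matrix (Fin m) (Fin r) F × Matrix (Fin r) (Fin n) F}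
      (hP : P.1 * P.2 = X₀ * Y₀) : X₀ * (L₀ * P.1) = P.1 ∧ P.2 * R₀ * Y₀ = P.2 := by
    obtain ⟨hX, hY⟩ := rank_mul_eq_iff.mp (hP ▸ hM)
    obtain ⟨W, hW⟩ :=
      exists_left_inverse_of_rank_eq_card_width (hX.trans (Fintype.card_fin r).symm)
    obtain ⟨Z, hZ⟩ :=
      exists_right_inverse_of_rank_eq_card_height (hY.trans (Fintype.card_fin r).symm)
    exact ⟨mul_mul_eq_left_of_mul_eq_mul hL₀ hZ hP, mul_mul_eq_right_of_mul_eq_mul hR₀ hW hP⟩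
  have val_inv {P : Matrix (Fin m) (Fin r) F × Matrix (Fin r) (Fin n) F}
      (hP : P.1 * P.2 = X₀ * Y₀) : L₀ * P.1 * (P.2 * R₀) = 1 := by
    rw [Matrix.mul_assoc, ← Matrix.mul_assoc P.1, hP, ← Matrix.mul_assoc, ← Matrix.mul_assoc, hL₀,
      Matrix.one_mul, hR₀]
  rw [← card_univ]
  symm
  refine card_bij' (fun g _ => (X₀ * g.1, g⁻¹.1 * Y₀))
    (fun P hP => ⟨L₀ * P.1, P.2 * R₀, val_inv (by simpa using hP),
      mul_eq_one_comm.mp (val_inv (by simpa using hP))⟩) ?_ (fun _ _ => mem_univ _) ?_ ?_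
  · intro g _
    simp only [mem_filter, mem_univ, true_and]
    rw [Matrix.mul_assoc, ← Matrix.mul_assoc g.1, ← Units.val_mul, mul_inv_cancel, Units.val_one,
      Matrix.one_mul]
  · intro g _
    exact Units.ext (by simp only [← Matrix.mul_assoc, hL₀, Matrix.one_mul])
  · intro P hP
    obtain ⟨hX, hY⟩ := factors (by simpa using hP)
    exact Prod.ext hX hY

theorem card_filter_rank_mul_eq_and {m n r : ℕ} (p : Matrix (Fin m) (Fin n) F → Prop)
    [DecidablePred p] :
    #{P : Matrix (Fin m) (Fin r) F × Matrix (Fin r) (Fin n) F |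
        (P.1 * P.2).rank = r ∧ p (P.1 * P.2)} =
      Fintype.card (GL (Fin r) F) * #((rankSet F m n r).filter p) := by
  rw [card_eq_sum_card_fiberwise (f := fun P => P.1 * P.2) (t := (rankSet F m n r).filter p)
    (fun P hP => by simpa [rankSet] using hP), sum_const_nat fun M hM => ?_, mul_comm]
  simp only [rankSet, mem_filter, mem_univ, true_and] at hM
  rw [filter_filter, ← card_filter_mul_eq hM.1]
  congr 1
  exact filter_congr fun P _ => ⟨And.right, fun h => ⟨h ▸ hM, h⟩⟩

end FiniteField

end Matrix

section

open Matrix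

variable {F : Type*} [Field F] [Fintype F]

theorem abs_card_filter_rankSet_div_sub_le {m n r : ℕ} (p : Matrix (Fin m) (Fin n) F → Prop)
    [DecidablePred p] (hrm : r ≤ m) (hrn : r ≤ n) :
    |(#((rankSet F m n r).filter p) : ℝ) / #(rankSet F m n r) -
      #{P : Matrix (Fin m) (Fin r) F × Matrix (Fin r) (Fin n) F | p (P.1 * P.2)} /
        Fintype.card (Matrix (Fin m) (Fin r) F × Matrix (Fin r) (Fin n) F)| ≤
      (Fintype.card F : ℝ)⁻¹ ^ (m - r) + (Fintype.card F : ℝ)⁻¹ ^ (n - r) := by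
  set S := univ.filter fun P : Matrix (Fin m) (Fin r) F × Matrix (Fin r) (Fin n) F =>
    (P.1 * P.2).rank = r
  have hcond : (#((rankSet F m n r).filter p) : ℝ) / #(rankSet F m n r) =
      #(S.filter fun P => p (P.1 * P.2)) / #S := by
    have hc : (0 : ℝ) < Fintype.card (GL (Fin r) F) := by exact_mod_cast Fintype.card_pos
    have hS := card_filter_rank_mul_eq_and (r := r) fun _ : Matrix (Fin m) (Fin n) F => True
    simp only [and_true, filter_true] at hS
    rw [filter_filter, card_filter_rank_mul_eq_and, hS, Nat.cast_mul, Nat.cast_mul,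
      mul_div_mul_left _ _ hc.ne']
  have hprod : #S = #{X : Matrix (Fin m) (Fin r) F | X.rank = r} *
      #{Y : Matrix (Fin r) (Fin n) F | Y.rank = r} := by
    rw [← card_product, ← filter_product, univ_product_univ]
    exact congrArg card (filter_congr fun P _ => rank_mul_eq_iff)
  have hX := one_sub_inv_pow_le_card_filter_rank_eq_width_div (F := F) hrm
  have hY := one_sub_inv_pow_le_card_filter_rank_eq_height_div (F := F) hrn
  have hX1 : (#{X : Matrix (Fin m) (Fin r) F | X.rank = r} : ℝ) /
      Fintype.card (Matrix (Fin m) (Fin r) F) ≤ 1 :=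
    div_le_one_of_le₀ (Nat.cast_le.mpr (card_le_univ _)) (Nat.cast_nonneg _)
  rw [hcond]
  refine (abs_card_filter_div_sub_le_of_subset (subset_univ S) _).trans ?_
  rw [card_univ, Fintype.card_prod, hprod, Nat.cast_mul, Nat.cast_mul, mul_div_mul_comm]
  have union_bound {x y a b : ℝ} (hx0 : 0 ≤ x) (hx : 1 - a ≤ x) (hx1 : x ≤ 1) (hy : 1 - b ≤ y)
      (hb : 0 ≤ b) : 1 - x * y ≤ a + b := by
    nlinarith [mul_le_mul_of_nonneg_left hy hx0, mul_le_of_le_one_left hb hx1]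
  exact union_bound (by positivity) hX hX1 hY (by positivity)

theorem abs_probNormCtLe_sub_probNormCtProdLe_le (A : Finset F) {m n r : ℕ} (hrm : r ≤ m)
    (hrn : r ≤ n) (t : ℝ) :
    |probNormCtLe F A m n r t - probNormCtProdLe F A m n r t| ≤
      (Fintype.card F : ℝ)⁻¹ ^ (m - r) + (Fintype.card F : ℝ)⁻¹ ^ (n - r) :=
  abs_card_filter_rankSet_div_sub_le _ hrm hrn

end

theorem probNormCt_rank_sub_prod_tendsto_zero_general
    {F : Type*} [Field F] [Fintype F]
    (A : Finset F)
    (m n r : ℕ → ℕ)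
    (hmnr : Tendsto (fun k => (min (m k) (n k) : ℤ) - (r k : ℤ)) atTop atTop) :
    ∀ t : ℝ, Tendsto (fun k =>
        |probNormCtLe F A (m k) (n k) (r k) t - probNormCtProdLe F A (m k) (n k) (r k) t|)
      atTop (nhds 0) := by
  intro t
  have hgap {a : ℕ → ℕ} (ha : ∀ k, min (m k) (n k) ≤ a k) :
      Tendsto (fun k => a k - r k) atTop atTop :=
    tendsto_natCast_atTop_iff.mp <| tendsto_atTop_mono' _
      ((hmnr.eventually_ge_atTop 0).mono fun k hk => by dsimp only; have := ha k; omega) hmnr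
  have hq : (Fintype.card F : ℝ)⁻¹ < 1 :=
    inv_lt_one_of_one_lt₀ (by exact_mod_cast Fintype.one_lt_card)
  have hpow := tendsto_pow_atTop_nhds_zero_of_lt_one (by positivity) hq
  have hbound := (hpow.comp (hgap fun k => min_le_left _ _)).add
    (hpow.comp (hgap fun k => min_le_right _ _))
  rw [add_zero] at hbound
  refine squeeze_zero' (Eventually.of_forall fun k => abs_nonneg _) ?_ hbound
  filter_upwards [hmnr.eventually_ge_atTop 0] with k hk
  exact abs_probNormCtLe_sub_probNormCtProdLe_le A (by omega) (by omega) t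

/-- Equation (2.2): the distribution functions of the normalized counts for the rank model
and the product model agree asymptotically, as `m, n → ∞` with `min{m,n} - r → ∞`. -/
theorem probNormCt_rank_sub_prod_tendsto_zero
    {F : Type*} [Field F] [Fintype F]
    (A : Finset F) (hA : A.Nonempty) (hA' : A ≠ Finset.univ)
    (m n r : ℕ → ℕ)
    (hm0 : ∀ k, 0 < m k) (hn0 : ∀ k, 0 < n k) (hr0 : ∀ k, 0 < r k)
    (hm : Tendsto m atTop atTop) (hn : Tendsto n atTop atTop)
    (hmnr : Tendsto (fun k => (min (m k) (n k) : ℤ) - (r k : ℤ)) atTop atTop) :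
    ∀ t : ℝ, Tendsto (fun k =>
        |probNormCtLe F A (m k) (n k) (r k) t - probNormCtProdLe F A (m k) (n k) (r k) t|)
      atTop (nhds 0) :=
  probNormCt_rank_sub_prod_tendsto_zero_general A m n r hmnr

end
end

section
/- Let q be a prime power, A ⊆ F_q, and let m, n, r be positive integers. Let X ∈ F_q^{m×r} and Y ∈ F_q^{r×n} be independent random matrices, each uniformly distributed over all matrices of its size. Then the expectation of ct_A(XY) equals μ_A(q,m,n,r) = mn(q^{-1}#A − q^{-r}γ_A(q)). -/
open scoped Classical BigOperators
open Filter

noncomputable section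

/-!
The entry `(XY)ᵢⱼ` is the dot product of the `i`-th row of `X` and the `j`-th column of `Y`, and
this pair of vectors is again uniform on `Fʳ × Fʳ`, because the pushforward of the
uniform distribution under a surjective additive homomorphism is uniform. For a fixed `u ≠ 0`, the
linear form `v ↦ u ⬝ᵥ v` is surjective, so `u ⬝ᵥ v` is uniform on `F` and lies in `A` with
probability `#A / q`; for `u = 0` it lies in `A` exactly when `0 ∈ A`. Averaging over `u`, where
`u = 0` has probability `q⁻ʳ`, gives `#A / q - q⁻ʳ γ_A(q)` for each of the `mn` entries.
-/

open Finset

theorem AddMonoidHom.sum_comp_div_card_of_surjective {G H K : Type*} [AddGroup G] [Fintype G]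
    [AddGroup H] [Fintype H] [Semifield K] [CharZero K] (φ : G →+ H)
    (hφ : Function.Surjective φ) (f : H → K) :
    (∑ g, f (φ g)) / Fintype.card G = (∑ h, f h) / Fintype.card H := by
  set c := #{g | φ g = 0}
  have hfiber (h : H) : #{g | φ g = h} = c :=
    AddMonoidHom.card_fiber_eq_of_mem_range φ (hφ h) ⟨0, map_zero φ⟩
  have hc : c ≠ 0 := card_ne_zero.mpr ⟨0, by simp⟩
  have hcard : Fintype.card G = Fintype.card H * c := by
    rw [← card_univ, card_eq_sum_card_fiberwise (f := φ) (t := univ) (by simp)]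
    simp [hfiber]
  have hsum : ∑ g, f (φ g) = c • ∑ h, f h := by
    rw [sum_comp, image_univ_of_surjective hφ, smul_sum]
    simp only [hfiber]
  rw [hsum, hcard, nsmul_eq_mul, Nat.cast_mul]
  field_simp

theorem Matrix.sum_mul_apply_div_card {l m n R K : Type*} [Fintype l] [DecidableEq l]
    [Fintype m] [DecidableEq m] [Fintype n] [DecidableEq n] [Ring R] [Fintype R]
    [Semifield K] [CharZero K] (i : l) (j : n) (f : R → K) :
    (∑ P : Matrix l m R × Matrix m n R, f ((P.1 * P.2) i j)) /
        Fintype.card (Matrix l m R × Matrix m n R) =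
      (∑ P : (m → R) × (m → R), f (P.1 ⬝ᵥ P.2)) /
        Fintype.card ((m → R) × (m → R)) := by
  let rowCol : Matrix l m R × Matrix m n R →+ (m → R) × (m → R) :=
    { toFun := fun P => (P.1 i, fun k => P.2 k j), map_zero' := rfl, map_add' := fun _ _ => rfl }
  have hrowCol : Function.Surjective rowCol := fun v =>
    ⟨(Matrix.of fun _ => v.1, Matrix.of fun k _ => v.2 k), rfl⟩
  simp_rw [Matrix.mul_apply']
  exact rowCol.sum_comp_div_card_of_surjective hrowCol (fun v => f (v.1 ⬝ᵥ v.2))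

section
variable {ι F : Type*} [Fintype ι] [DecidableEq ι] [Field F] [Fintype F]

omit [Fintype F] in
theorem dotProduct_left_surjective {u : ι → F} (hu : u ≠ 0) :
    Function.Surjective (u ⬝ᵥ ·) := by
  obtain ⟨i, hi⟩ := Function.ne_iff.mp hu
  intro a
  refine ⟨Pi.single i (a / u i), ?_⟩
  simp [dotProduct_single, mul_div_cancel₀ _ hi]

theorem sum_dotProduct_mem_div_card (A : Finset F) (u : ι → F) :
    (∑ v : ι → F, if u ⬝ᵥ v ∈ A then (1 : ℝ) else 0) / Fintype.card (ι → F) =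
      #A / Fintype.card F - if u = 0 then gammaA A else 0 := by
  rcases eq_or_ne u 0 with rfl | hu
  · by_cases h0 : (0 : F) ∈ A <;> simp [h0, gammaA]
  · let dot : (ι → F) →+ F := AddMonoidHom.mk' (u ⬝ᵥ ·) (dotProduct_add u)
    calc _ = (∑ a : F, if a ∈ A then (1 : ℝ) else 0) / Fintype.card F :=
          dot.sum_comp_div_card_of_surjective (dotProduct_left_surjective hu) _
      _ = _ := by simp [hu]

theorem sum_dotProduct_mem_div_card_prod (A : Finset F) :
    (∑ P : (ι → F) × (ι → F), if P.1 ⬝ᵥ P.2 ∈ A then (1 : ℝ) else 0) /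
        Fintype.card ((ι → F) × (ι → F)) =
      #A / Fintype.card F - (Fintype.card F : ℝ)⁻¹ ^ Fintype.card ι * gammaA A := by
  have hq : (Fintype.card F : ℝ) ≠ 0 := by positivity
  rw [Fintype.sum_prod_type, Fintype.card_prod, Nat.cast_mul, ← div_div, sum_div]
  simp only [sum_dotProduct_mem_div_card]
  simp only [sum_sub_distrib, sum_const, sum_ite_eq', mem_univ, if_true, card_univ,
    Fintype.card_fun, nsmul_eq_mul, Nat.cast_pow, inv_pow]
  field_simp

end

theorem expectation_ctA_prod_general
    {F : Type*} [Field F] [Fintype F] (A : Finset F) (m n r : ℕ) :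
    (∑ P : Matrix (Fin m) (Fin r) F × Matrix (Fin r) (Fin n) F,
        (ctA A (P.1 * P.2) : ℝ)) /
      (Fintype.card (Matrix (Fin m) (Fin r) F × Matrix (Fin r) (Fin n) F) : ℝ) =
    muA A m n r := by
  have hct (M : Matrix (Fin m) (Fin n) F) :
      (ctA A M : ℝ) = ∑ p : Fin m × Fin n, if M p.1 p.2 ∈ A then 1 else 0 := by
    rw [ctA, card_filter]
    push_cast
    rfl
  calc _ = ∑ p : Fin m × Fin n,
          (∑ P : Matrix (Fin m) (Fin r) F × Matrix (Fin r) (Fin n) F,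
            if (P.1 * P.2) p.1 p.2 ∈ A then (1 : ℝ) else 0) /
          Fintype.card (Matrix (Fin m) (Fin r) F × Matrix (Fin r) (Fin n) F) := by
        simp_rw [hct]
        rw [sum_comm, sum_div]
    _ = ∑ _p : Fin m × Fin n,
          (#A / Fintype.card F - (Fintype.card F : ℝ)⁻¹ ^ r * gammaA A) :=
        sum_congr rfl fun p _ => by
          rw [Matrix.sum_mul_apply_div_card (m := Fin r) p.1 p.2
              (fun a => if a ∈ A then (1 : ℝ) else 0),
            sum_dotProduct_mem_div_card_prod, Fintype.card_fin]
    _ = muA A m n r := by simp [muA]; ring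

/-- Lemma 3.1(1): the expectation of `ct_A(XY)` for independent uniform `X ∈ F^{m×r}`,
`Y ∈ F^{r×n}` equals `μ_A(q,m,n,r)`. -/
theorem expectation_ctA_prod
    {F : Type*} [Field F] [Fintype F] (A : Finset F) (m n r : ℕ)
    (hm : 0 < m) (hn : 0 < n) (hr : 0 < r) :
    (∑ P : Matrix (Fin m) (Fin r) F × Matrix (Fin r) (Fin n) F,
        (ctA A (P.1 * P.2) : ℝ)) /
      (Fintype.card (Matrix (Fin m) (Fin r) F × Matrix (Fin r) (Fin n) F) : ℝ) =
    muA A m n r :=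
  expectation_ctA_prod_general A m n r

end
end

section
/- Let q be a prime power, A ⊆ F_q, and let m, n, r be positive integers. Let X ∈ F_q^{m×r} and Y ∈ F_q^{r×n} be independent random matrices, each uniformly distributed over all matrices of its size. Then the variance of ct_A(XY) equals σ_A²(q,m,n,r) = mn(q^{-1}#A − q^{-r}γ_A(q))(1 − q^{-1}#A + q^{-r}γ_A(q)) + mn(m+n−2)q^{-r}(1−q^{-r})γ_A(q)². -/
/-!
Write `ct_A(XY) = ∑ i j, 1_A(xᵢ ⬝ᵥ yⱼ)`, where the rows `xᵢ` of `X` and the columns `yⱼ` of `Y`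
are independent and uniform on `F^r`. Two terms are independent unless they share a row or
a column index, so the variance is a sum of `mn` Bernoulli variances and `mn(m + n - 2)`
covariances of terms sharing one index. For `x ≠ 0` the form `y ↦ x ⬝ᵥ y` is uniformly
distributed on `F`, so `P(x) := P(x ⬝ᵥ y ∈ A | x)` is `#A / q` for `x ≠ 0` and `1_A(0)` for
`x = 0`. Its mean over `x` is `#A/q - q^{-r} γ`, and its variance over `x`, which is the
covariance of two terms sharing the index of `x`, is `q^{-r}(1 - q^{-r}) γ²`.
-/

open scoped Classical BigOperators
open Filter

noncomputable section

open scoped Matrix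

section Expectation

variable {ι β K : Type*} [Fintype ι] [DecidableEq ι] [Fintype β]

theorem Fintype.prod_expect [Semifield K] [CharZero K] (g : ι → β → K) :
    ∏ k, 𝔼 b, g k b = 𝔼 f : ι → β, ∏ k, g k (f k) := by
  simp only [Fintype.expect_eq_sum_div_card, Finset.prod_div_distrib, Fintype.prod_sum,
    Fintype.card_fun, Finset.prod_const, Finset.card_univ, Nat.cast_pow]

variable [Nonempty β] [Semifield K] [CharZero K]

theorem Fintype.expect_pi_apply (i : ι) (g : β → K) :
    𝔼 f : ι → β, g (f i) = 𝔼 b, g b := by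
  have hprod := (Fintype.prod_expect (fun k => if k = i then g else 1)).symm
  simp only [ite_apply, Pi.one_apply, Finset.prod_ite_eq', Finset.mem_univ, if_true] at hprod
  rw [hprod, Finset.prod_eq_single i (fun k _ hk => by simp [hk]) (by simp)]
  simp

theorem Fintype.expect_pi_apply_mul_apply_of_ne {i i' : ι} (h : i ≠ i') (g g' : β → K) :
    𝔼 f : ι → β, g (f i) * g' (f i') = (𝔼 b, g b) * 𝔼 b, g' b := by
  let G : ι → β → K := fun k => if k = i then g else if k = i' then g' else 1
  have hG : ∀ k ∈ Finset.univ, k ≠ i ∧ k ≠ i' → G k = 1 := fun k _ hk => by simp [G, hk.1, hk.2]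
  have two_factors (u : ι → K) (hu : ∀ k ∈ Finset.univ, k ≠ i ∧ k ≠ i' → u k = 1) :
      ∏ k, u k = u i * u i' :=
    Finset.prod_eq_mul_of_mem i i' (Finset.mem_univ _) (Finset.mem_univ _) h hu
  calc 𝔼 f : ι → β, g (f i) * g' (f i') = 𝔼 f : ι → β, ∏ k, G k (f k) := by
        refine Finset.expect_congr rfl fun f _ => ?_
        rw [two_factors _ fun k hk hki => by simp [hG k hk hki]]
        simp [G, h.symm]
    _ = ∏ k, 𝔼 b, G k b := (Fintype.prod_expect G).symm
    _ = (𝔼 b, g b) * 𝔼 b, g' b := by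
        rw [two_factors _ fun k hk hki => by simp [hG k hk hki]]
        simp [G, h.symm]

end Expectation

theorem Fintype.sum_ite_eq_const {ι K : Type*} [Fintype ι] [DecidableEq ι] [Ring K]
    (i : ι) (u v : K) :
    ∑ i', (if i = i' then u else v) = u + (Fintype.card ι - 1) * v := by
  have hsplit : ∀ i', (if i = i' then u else v) = (if i = i' then u - v else 0) + v :=
    fun i' => by split_ifs <;> simp
  simp only [hsplit, Finset.sum_add_distrib, Finset.sum_ite_eq, Finset.mem_univ, if_true,
    Finset.sum_const, Finset.card_univ, nsmul_eq_mul, sub_one_mul]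
  abel

theorem Fintype.expect_ite_eq_const' {ι K : Type*} [Fintype ι] [DecidableEq ι] [Field K]
    [CharZero K] (i : ι) (u v : K) :
    𝔼 i', (if i' = i then u else v) = (u + (Fintype.card ι - 1) * v) / Fintype.card ι := by
  rw [Fintype.expect_eq_sum_div_card]
  simp_rw [eq_comm (b := i)]
  rw [Fintype.sum_ite_eq_const]

section BilinearCount

variable {ι κ α β K : Type*} [Fintype ι] [DecidableEq ι] [Fintype κ] [DecidableEq κ]
  [Fintype α] [Nonempty α] [Fintype β] [Nonempty β] [Field K] [CharZero K] (φ : α → β → K)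

theorem expect_mul_apply_apply (i i' : ι) (j j' : κ) :
    𝔼 x : ι → α, 𝔼 y : κ → β, φ (x i) (y j) * φ (x i') (y j') =
      if i = i' then
        if j = j' then 𝔼 a, 𝔼 b, φ a b ^ 2 else 𝔼 a, (𝔼 b, φ a b) ^ 2
      else
        if j = j' then 𝔼 b, (𝔼 a, φ a b) ^ 2 else (𝔼 a, 𝔼 b, φ a b) ^ 2 := by
  split_ifs with hi hj hj
  · subst hi hj
    have inner (a : α) : 𝔼 y : κ → β, φ a (y j) * φ a (y j) = 𝔼 b, φ a b ^ 2 := by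
      simp only [Fintype.expect_pi_apply j (fun b => φ a b * φ a b), sq]
    simp only [inner]
    exact Fintype.expect_pi_apply i (fun a => 𝔼 b, φ a b ^ 2)
  · subst hi
    have inner (a : α) : 𝔼 y : κ → β, φ a (y j) * φ a (y j') = (𝔼 b, φ a b) ^ 2 := by
      rw [Fintype.expect_pi_apply_mul_apply_of_ne hj (φ a) (φ a), sq]
    simp only [inner]
    exact Fintype.expect_pi_apply i (fun a => (𝔼 b, φ a b) ^ 2)
  · subst hj
    have inner (b : β) : 𝔼 x : ι → α, φ (x i) b * φ (x i') b = (𝔼 a, φ a b) ^ 2 := by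
      rw [Fintype.expect_pi_apply_mul_apply_of_ne hi (φ · b) (φ · b), sq]
    rw [Finset.expect_comm]
    simp only [inner]
    exact Fintype.expect_pi_apply j (fun b => (𝔼 a, φ a b) ^ 2)
  · have inner (a a' : α) :
        𝔼 y : κ → β, φ a (y j) * φ a' (y j') = (𝔼 b, φ a b) * 𝔼 b, φ a' b :=
      Fintype.expect_pi_apply_mul_apply_of_ne hj (φ a) (φ a')
    simp only [inner]
    rw [Fintype.expect_pi_apply_mul_apply_of_ne hi (fun a => 𝔼 b, φ a b) (fun a => 𝔼 b, φ a b),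
      sq]

theorem expect_sum_apply_apply :
    𝔼 x : ι → α, 𝔼 y : κ → β, ∑ i, ∑ j, φ (x i) (y j) =
      Fintype.card ι * Fintype.card κ * 𝔼 a, 𝔼 b, φ a b := by
  have inner (x : ι → α) (i : ι) (j : κ) : 𝔼 y : κ → β, φ (x i) (y j) = 𝔼 b, φ (x i) b :=
    Fintype.expect_pi_apply j (φ (x i))
  simp only [Finset.expect_sum_comm, inner]
  simp only [fun i => Fintype.expect_pi_apply i (fun a => 𝔼 b, φ a b), Finset.sum_const,
    Finset.card_univ, nsmul_eq_mul]
  ring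

theorem expect_sq_sum_apply_apply :
    𝔼 x : ι → α, 𝔼 y : κ → β, (∑ i, ∑ j, φ (x i) (y j)) ^ 2 =
      Fintype.card ι * Fintype.card κ *
        (𝔼 a, 𝔼 b, φ a b ^ 2 + (Fintype.card κ - 1) * 𝔼 a, (𝔼 b, φ a b) ^ 2 +
          (Fintype.card ι - 1) * (𝔼 b, (𝔼 a, φ a b) ^ 2 +
            (Fintype.card κ - 1) * (𝔼 a, 𝔼 b, φ a b) ^ 2)) := by
  simp only [sq (∑ i, _), Finset.sum_mul_sum, Finset.expect_sum_comm, expect_mul_apply_apply,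
    Finset.sum_ite_irrel, Fintype.sum_ite_eq_const, Finset.sum_const, Finset.card_univ,
    nsmul_eq_mul]
  ring

theorem variance_sum_apply_apply :
    𝔼 x : ι → α, 𝔼 y : κ → β, (∑ i, ∑ j, φ (x i) (y j)) ^ 2 -
        (𝔼 x : ι → α, 𝔼 y : κ → β, ∑ i, ∑ j, φ (x i) (y j)) ^ 2 =
      Fintype.card ι * Fintype.card κ * (𝔼 a, 𝔼 b, φ a b ^ 2 - (𝔼 a, 𝔼 b, φ a b) ^ 2) +
      Fintype.card ι * Fintype.card κ * (Fintype.card κ - 1) *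
        (𝔼 a, (𝔼 b, φ a b) ^ 2 - (𝔼 a, 𝔼 b, φ a b) ^ 2) +
      Fintype.card ι * Fintype.card κ * (Fintype.card ι - 1) *
        (𝔼 b, (𝔼 a, φ a b) ^ 2 - (𝔼 a, 𝔼 b, φ a b) ^ 2) := by
  rw [expect_sq_sum_apply_apply, expect_sum_apply_apply]
  ring

end BilinearCount

section DotProduct

variable {F σ K : Type*} [Field F] [Fintype F] [Fintype σ] [DecidableEq σ]

theorem expect_apply_dotProduct_of_ne_zero [Semifield K] [CharZero K]
    {a : σ → F} (ha : a ≠ 0) (g : F → K) :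
    𝔼 b, g (a ⬝ᵥ b) = 𝔼 t, g t := by
  obtain ⟨k, hk⟩ : ∃ k, a k ≠ 0 := Function.ne_iff.mp ha
  have hv : a ⬝ᵥ Pi.single k (a k)⁻¹ = 1 := by rw [dotProduct_single, mul_inv_cancel₀ hk]
  -- translating `b` along a vector `v` with `a ⬝ᵥ v = 1` translates `a ⬝ᵥ b` by an arbitrary `t`
  have shift (t : F) : 𝔼 b, g (a ⬝ᵥ b) = 𝔼 b, g (a ⬝ᵥ b + t) :=
    (Fintype.expect_equiv (Equiv.addRight (t • Pi.single k (a k)⁻¹)) _ _ fun b => by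
      simp [dotProduct_add, hv]).symm
  calc 𝔼 b, g (a ⬝ᵥ b) = 𝔼 t : F, 𝔼 b, g (a ⬝ᵥ b + t) := by
        simp only [← shift, Fintype.expect_const]
    _ = 𝔼 b : σ → F, 𝔼 t, g (a ⬝ᵥ b + t) := Finset.expect_comm ..
    _ = 𝔼 t, g t := by
        have translate (c : F) : 𝔼 t, g (c + t) = 𝔼 t, g t :=
          Fintype.expect_equiv (Equiv.addLeft c) _ _ fun _ => rfl
        simp only [translate, Fintype.expect_const]

variable [Field K] [CharZero K] (A : Finset F)

theorem expect_ite_dotProduct_mem (a : σ → F) :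
    𝔼 b, (if a ⬝ᵥ b ∈ A then (1 : K) else 0) =
      if a = 0 then (if (0 : F) ∈ A then 1 else 0) else (A.card : K) / Fintype.card F := by
  by_cases ha : a = 0
  · simp [ha]
  · rw [if_neg ha, expect_apply_dotProduct_of_ne_zero ha (fun t => if t ∈ A then (1 : K) else 0),
      Fintype.expect_eq_sum_div_card, Finset.sum_boole, Finset.filter_mem_eq_inter,
      Finset.univ_inter]

theorem expect_pow_expect_ite_dotProduct_mem (k : ℕ) :
    𝔼 a : σ → F, (𝔼 b, if a ⬝ᵥ b ∈ A then (1 : K) else 0) ^ k =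
      ((if (0 : F) ∈ A then 1 else 0) ^ k +
          ((Fintype.card F : K) ^ Fintype.card σ - 1) * ((A.card : K) / Fintype.card F) ^ k) /
        (Fintype.card F : K) ^ Fintype.card σ := by
  simp only [expect_ite_dotProduct_mem, apply_ite (· ^ k), Fintype.expect_ite_eq_const',
    Fintype.card_fun, Nat.cast_pow]

end DotProduct

theorem expect_matrix_prod_transpose {m n r R K : Type*} [Fintype m] [Fintype n] [Fintype r]
    [Fintype R] [DecidableEq m] [DecidableEq n] [DecidableEq r] [AddCommMonoid K] [Module ℚ≥0 K]
    (G : (m → r → R) → (n → r → R) → K) :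
    𝔼 P : Matrix m r R × Matrix r n R, G P.1 P.2ᵀ = 𝔼 x, 𝔼 y, G x y := by
  rw [← Finset.univ_product_univ, Finset.expect_product]
  refine Finset.expect_congr rfl fun x _ => ?_
  exact Fintype.expect_bijective Matrix.transpose
    ⟨Matrix.transpose_injective, fun y => ⟨yᵀ, Matrix.transpose_transpose y⟩⟩ _ _ fun _ => rfl

theorem ctA_mul_eq_sum_dotProduct {F : Type*} [Fintype F] [NonUnitalNonAssocSemiring F]
    (A : Finset F) {m n r : ℕ} (X : Matrix (Fin m) (Fin r) F) (Y : Matrix (Fin r) (Fin n) F) :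
    (ctA A (X * Y) : ℝ) = ∑ i, ∑ j, if X i ⬝ᵥ Yᵀ j ∈ A then 1 else 0 := by
  rw [ctA, Finset.card_filter, Nat.cast_sum, Fintype.sum_prod_type]
  simp only [Nat.cast_ite, Nat.cast_one, Nat.cast_zero, Matrix.mul_apply']
  rfl

theorem sigmaA2_eq {F : Type*} [Fintype F] [Zero F] (A : Finset F) (m n r : ℕ) {p R : ℝ}
    (hp : p = ((if (0 : F) ∈ A then 1 else 0) +
        ((Fintype.card F : ℝ) ^ r - 1) * ((A.card : ℝ) / Fintype.card F)) /
          (Fintype.card F : ℝ) ^ r)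
    (hR : R = ((if (0 : F) ∈ A then 1 else 0) ^ 2 +
        ((Fintype.card F : ℝ) ^ r - 1) * ((A.card : ℝ) / Fintype.card F) ^ 2) /
          (Fintype.card F : ℝ) ^ r) :
    sigmaA2 A m n r = m * n * (p - p ^ 2) + m * n * (n - 1) * (R - p ^ 2) +
      m * n * (m - 1) * (R - p ^ 2) := by
  have hq : (Fintype.card F : ℝ) ^ r ≠ 0 := by positivity
  subst hp hR
  by_cases h0 : (0 : F) ∈ A <;>
  · simp only [sigmaA2, gammaA, h0, if_true, if_false, inv_pow]
    field_simp
    ring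

theorem variance_ctA_prod_general
    {F : Type*} [Field F] [Fintype F] (A : Finset F) (m n r : ℕ) :
    (∑ P : Matrix (Fin m) (Fin r) F × Matrix (Fin r) (Fin n) F,
        (ctA A (P.1 * P.2) : ℝ) ^ 2) /
      (Fintype.card (Matrix (Fin m) (Fin r) F × Matrix (Fin r) (Fin n) F) : ℝ) -
    ((∑ P : Matrix (Fin m) (Fin r) F × Matrix (Fin r) (Fin n) F,
        (ctA A (P.1 * P.2) : ℝ)) /
      (Fintype.card (Matrix (Fin m) (Fin r) F × Matrix (Fin r) (Fin n) F) : ℝ)) ^ 2 =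
    sigmaA2 A m n r := by
  set φ : (Fin r → F) → (Fin r → F) → ℝ := fun a b => if a ⬝ᵥ b ∈ A then 1 else 0 with hφ
  simp only [← Fintype.expect_eq_sum_div_card, ctA_mul_eq_sum_dotProduct]
  rw [expect_matrix_prod_transpose (fun x y => (∑ i, ∑ j, φ (x i) (y j)) ^ 2),
    expect_matrix_prod_transpose (fun x y => ∑ i, ∑ j, φ (x i) (y j)), variance_sum_apply_apply]
  have hsq (a b : Fin r → F) : φ a b ^ 2 = φ a b := by simp [hφ]
  have hcol : 𝔼 b, (𝔼 a, φ a b) ^ 2 = 𝔼 a, (𝔼 b, φ a b) ^ 2 :=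
    Finset.expect_congr rfl fun b _ => by simp only [hφ, dotProduct_comm _ b]
  have hp := expect_pow_expect_ite_dotProduct_mem (σ := Fin r) (K := ℝ) A 1
  have hR := expect_pow_expect_ite_dotProduct_mem (σ := Fin r) (K := ℝ) A 2
  simp only [pow_one, Fintype.card_fin] at hp hR
  simp only [hsq, hcol, Fintype.card_fin]
  rw [sigmaA2_eq A m n r hp hR]

/-- Lemma 3.1(2): the variance of `ct_A(XY)` for independent uniform `X ∈ F^{m×r}`,
`Y ∈ F^{r×n}` equals `σ_A²(q,m,n,r)`. -/
theorem variance_ctA_prod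
    {F : Type*} [Field F] [Fintype F] (A : Finset F) (m n r : ℕ)
    (hm : 0 < m) (hn : 0 < n) (hr : 0 < r) :
    (∑ P : Matrix (Fin m) (Fin r) F × Matrix (Fin r) (Fin n) F,
        (ctA A (P.1 * P.2) : ℝ) ^ 2) /
      (Fintype.card (Matrix (Fin m) (Fin r) F × Matrix (Fin r) (Fin n) F) : ℝ) -
    ((∑ P : Matrix (Fin m) (Fin r) F × Matrix (Fin r) (Fin n) F,
        (ctA A (P.1 * P.2) : ℝ)) /
      (Fintype.card (Matrix (Fin m) (Fin r) F × Matrix (Fin r) (Fin n) F) : ℝ)) ^ 2 =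
    sigmaA2 A m n r :=
  variance_ctA_prod_general A m n r

end
end

section
/- Let q be a prime power, r a positive integer, and A ⊆ F_q. Let x, y, y' be mutually independent random vectors, each uniformly distributed in F_q^r. Then the covariance of the random variables 1_A(x·y) and 1_A(x·y') equals q^{-r}(1 − q^{-r})·γ_A(q)². -/
/-!
For `x ≠ 0` the map `y ↦ x ⬝ᵥ y` is a surjective additive homomorphism, so `x ⬝ᵥ y` is uniform
on `F` and `∑ y, 1_A(x ⬝ᵥ y) = q^r · #A / q`, while for `x = 0` the sum is `q^r · 1_A(0)`.
Given `x`, the two indicators are independent, so the covariance is the variance of the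
conditional mean, a function of `x` taking the value `1_A(0)` with probability `q^{-r}` and
`#A / q` otherwise; that variance is `q^{-r}(1 - q^{-r})(#A / q - 1_A(0))²`.
-/

open scoped Classical BigOperators

noncomputable section

open Finset

theorem AddMonoidHom.card_nsmul_sum_comp_of_surjective {G H M : Type*} [AddGroup G] [Fintype G]
    [AddMonoid H] [Fintype H] [DecidableEq H] [AddCommMonoid M] (φ : G →+ H)
    (hφ : Function.Surjective φ) (f : H → M) :
    Fintype.card H • ∑ g, f (φ g) = Fintype.card G • ∑ h, f h := by
  set k := #{g | φ g = 0}
  have hfiber (h : H) : #{g | φ g = h} = k :=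
    AddMonoidHom.card_fiber_eq_of_mem_range φ (hφ h) (hφ 0)
  have hsum : ∑ g, f (φ g) = k • ∑ h, f h := by
    simp only [← sum_fiberwise' univ φ f, sum_const, hfiber, smul_sum]
  have hcard : Fintype.card G = Fintype.card H * k := by
    rw [← card_univ, card_eq_sum_card_fiberwise (f := φ) (t := univ) (by simp)]
    simp [hfiber]
  rw [hsum, hcard, smul_smul]

theorem sum_comp_dotProduct_of_ne_zero {ι F M : Type*} [Fintype ι] [DecidableEq ι]
    [DivisionRing F] [Fintype F] [AddCommMonoid M] {x : ι → F} (hx : x ≠ 0) (f : F → M) :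
    Fintype.card F • ∑ y, f (x ⬝ᵥ y) = Fintype.card (ι → F) • ∑ c, f c := by
  obtain ⟨j, hj⟩ := Function.ne_iff.mp hx
  refine (AddMonoidHom.mk' (x ⬝ᵥ ·) (dotProduct_add x)).card_nsmul_sum_comp_of_surjective
    (fun c => ⟨Pi.single j ((x j)⁻¹ * c), ?_⟩) f
  simp [dotProduct_single, mul_inv_cancel_left₀ hj]

theorem sum_comp_dotProduct {ι F K : Type*} [Fintype ι] [DecidableEq ι] [DivisionRing F]
    [Fintype F] [Field K] [CharZero K] (x : ι → F) (f : F → K) :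
    ∑ y, f (x ⬝ᵥ y) =
      Fintype.card (ι → F) * if x = 0 then f 0 else (∑ c, f c) / Fintype.card F := by
  split_ifs with hx
  · simp [hx]
  · have hq : (Fintype.card F : K) ≠ 0 := Nat.cast_ne_zero.mpr Fintype.card_ne_zero
    rw [mul_div_assoc', eq_div_iff hq, mul_comm, ← nsmul_eq_mul, ← nsmul_eq_mul,
      sum_comp_dotProduct_of_ne_zero hx]

theorem Fintype.sum_ite_eq_add_card_sub_one_mul {V R : Type*} [Fintype V] [DecidableEq V]
    [Ring R] (v : V) (a b : R) :
    ∑ x, (if x = v then a else b) = a + (Fintype.card V - 1) * b := by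
  rw [sum_ite]
  simp only [filter_eq', filter_ne', mem_univ, if_true, sum_const, card_singleton,
    card_erase_of_mem, card_univ, one_smul, nsmul_eq_mul]
  rw [Nat.cast_sub (Fintype.card_pos_iff.mpr ⟨v⟩), Nat.cast_one]

theorem Fintype.sum_prod_prod_mul_eq_sum_sq {X Y R : Type*} [Fintype X] [Fintype Y]
    [CommSemiring R] (h : X → Y → R) :
    ∑ p : X × Y × Y, h p.1 p.2.1 * h p.1 p.2.2 = ∑ x, (∑ y, h x y) ^ 2 := by
  simp only [Fintype.sum_prod_type, sq, sum_mul_sum]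

theorem Fintype.sum_prod_prod_fst {X Y M : Type*} [Fintype X] [Fintype Y] [AddCommMonoid M]
    (h : X → Y → M) :
    ∑ p : X × Y × Y, h p.1 p.2.1 = Fintype.card Y • ∑ x, ∑ y, h x y := by
  simp only [Fintype.sum_prod_type, sum_const, card_univ, smul_sum]

theorem Fintype.sum_prod_prod_snd {X Y M : Type*} [Fintype X] [Fintype Y] [AddCommMonoid M]
    (h : X → Y → M) :
    ∑ p : X × Y × Y, h p.1 p.2.2 = Fintype.card Y • ∑ x, ∑ y, h x y := by
  simp only [Fintype.sum_prod_type, sum_const, card_univ, smul_sum]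

theorem covariance_indicator_dot_prod_general
    {F : Type*} [Field F] [Fintype F] (A : Finset F) (r : ℕ) :
    (∑ p : (Fin r → F) × (Fin r → F) × (Fin r → F),
        (if (∑ i, p.1 i * p.2.1 i) ∈ A then (1 : ℝ) else 0) *
        (if (∑ i, p.1 i * p.2.2 i) ∈ A then (1 : ℝ) else 0)) /
      (Fintype.card ((Fin r → F) × (Fin r → F) × (Fin r → F)) : ℝ) -
    ((∑ p : (Fin r → F) × (Fin r → F) × (Fin r → F),
        (if (∑ i, p.1 i * p.2.1 i) ∈ A then (1 : ℝ) else 0)) /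
      (Fintype.card ((Fin r → F) × (Fin r → F) × (Fin r → F)) : ℝ)) *
    ((∑ p : (Fin r → F) × (Fin r → F) × (Fin r → F),
        (if (∑ i, p.1 i * p.2.2 i) ∈ A then (1 : ℝ) else 0)) /
      (Fintype.card ((Fin r → F) × (Fin r → F) × (Fin r → F)) : ℝ)) =
    ((Fintype.card F : ℝ))⁻¹ ^ r * (1 - ((Fintype.card F : ℝ))⁻¹ ^ r) * gammaA A ^ 2 := by
  set g : (Fin r → F) → (Fin r → F) → ℝ := fun x y => if (∑ i, x i * y i) ∈ A then 1 else 0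
  set q : ℝ := (Fintype.card F : ℝ)
  set N : ℝ := (Fintype.card (Fin r → F) : ℝ) with hN
  set e : ℝ := if (0 : F) ∈ A then 1 else 0 with he
  set u : ℝ := (A.card : ℝ) / q
  have hS (x : Fin r → F) : ∑ y, g x y = N * if x = 0 then e else u := by
    have hA : ∑ c : F, (if c ∈ A then (1 : ℝ) else 0) = A.card := by simp
    exact (sum_comp_dotProduct x _).trans (by rw [hA])
  have he2 : e ^ 2 = e := by rw [he]; split_ifs <;> norm_num
  have hsum : ∑ x, ∑ y, g x y = N * (e + (N - 1) * u) := by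
    simp only [hS, ← mul_sum, Fintype.sum_ite_eq_add_card_sub_one_mul, ← hN]
  have hsq : ∑ x, (∑ y, g x y) ^ 2 = N ^ 2 * (e + (N - 1) * u ^ 2) := by
    simp only [hS, mul_pow, apply_ite (· ^ 2), he2, ← mul_sum,
      Fintype.sum_ite_eq_add_card_sub_one_mul, ← hN]
  have hNq : N = q ^ r := by simp [N, q]
  have hN0 : N ≠ 0 := by positivity
  rw [Fintype.sum_prod_prod_mul_eq_sum_sq g, Fintype.sum_prod_prod_fst g,
    Fintype.sum_prod_prod_snd g, show gammaA A = u - e from rfl]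
  simp only [hsum, hsq, nsmul_eq_mul, ← hN, Fintype.card_prod, Nat.cast_mul, inv_pow, ← hNq]
  field_simp
  linear_combination (-N) * he2

/-- Case 1 in the proof of Lemma 3.1: for mutually independent uniform `x, y, y' ∈ F^r`,
the covariance of `1_A(x·y)` and `1_A(x·y')` equals `q^{-r}(1 - q^{-r}) γ_A(q)²`. -/
theorem covariance_indicator_dot_prod
    {F : Type*} [Field F] [Fintype F] (A : Finset F) (r : ℕ) (hr : 0 < r) :
    (∑ p : (Fin r → F) × (Fin r → F) × (Fin r → F),
        (if (∑ i, p.1 i * p.2.1 i) ∈ A then (1 : ℝ) else 0) *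
        (if (∑ i, p.1 i * p.2.2 i) ∈ A then (1 : ℝ) else 0)) /
      (Fintype.card ((Fin r → F) × (Fin r → F) × (Fin r → F)) : ℝ) -
    ((∑ p : (Fin r → F) × (Fin r → F) × (Fin r → F),
        (if (∑ i, p.1 i * p.2.1 i) ∈ A then (1 : ℝ) else 0)) /
      (Fintype.card ((Fin r → F) × (Fin r → F) × (Fin r → F)) : ℝ)) *
    ((∑ p : (Fin r → F) × (Fin r → F) × (Fin r → F),
        (if (∑ i, p.1 i * p.2.2 i) ∈ A then (1 : ℝ) else 0)) /
      (Fintype.card ((Fin r → F) × (Fin r → F) × (Fin r → F)) : ℝ)) =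
    ((Fintype.card F : ℝ))⁻¹ ^ r * (1 - ((Fintype.card F : ℝ))⁻¹ ^ r) * gammaA A ^ 2 :=
  covariance_indicator_dot_prod_general A r

end
end
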